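/- Let β > 1 and let e^{(i)} ∈ Δ be the i-th standard basis vector. Then p(e^{(i)}) = e^{(i)} and p is differentiable at e^{(i)} along the simplex with zero derivative: ‖p(x) − e^{(i)}‖ / ‖x − e^{(i)}‖ → 0 as x → e^{(i)} with x ∈ Δ \ {e^{(i)}}. Equivalently, the wage-free field satisfies G_0(x) = −(x − e^{(i)}) + o(‖x − e^{(i)}‖) as x → e^{(i)} in Δ, i.e., the derivative of G_0 at the monopoly point e^{(i)} along Δ is minus the identity. -/

import Mathlib

open scoped BigOperators Topology

/-- `p_i(x) = α_i x_i^β / (∑_j α_j x_j^β)` (real powers, `0^β = 0` for `β > 0`). -/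
noncomputable def pField (A : ℕ) (α : Fin A → ℝ) (β : ℝ)
    (x : EuclideanSpace ℝ (Fin A)) : EuclideanSpace ℝ (Fin A) :=
  WithLp.toLp 2 (fun i => α i * x i ^ β / ∑ j, α j * x j ^ β)

/-- The wage-free field `G₀(x) = p(x) - x`. -/
noncomputable def G0Field (A : ℕ) (α : Fin A → ℝ) (β : ℝ)
    (x : EuclideanSpace ℝ (Fin A)) : EuclideanSpace ℝ (Fin A) :=
  pField A α β x - x

/-- The closed simplex in `ℝ^A`. -/
def simplexE (A : ℕ) : Set (EuclideanSpace ℝ (Fin A)) :=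
  {x | (∀ i, 0 ≤ x i) ∧ ∑ i, x i = 1}

private lemma coord_le_norm {A : ℕ} (v : EuclideanSpace ℝ (Fin A)) (j : Fin A) :
    |v j| ≤ ‖v‖ := by
  rw [EuclideanSpace.norm_eq, ← Real.sqrt_sq_eq_abs]
  apply Real.sqrt_le_sqrt
  simpa [Real.norm_eq_abs, sq_abs] using
    Finset.single_le_sum (f := fun k => ‖v k‖ ^ 2) (fun k _ => sq_nonneg _) (Finset.mem_univ j)

private lemma norm_le_sum_abs {A : ℕ} (v : EuclideanSpace ℝ (Fin A)) :
    ‖v‖ ≤ ∑ j, |v j| := by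
  rw [EuclideanSpace.norm_eq]
  have h : ∑ j, ‖v j‖ ^ 2 ≤ (∑ j, |v j|) ^ 2 := by
    rw [sq, Finset.sum_mul]
    apply Finset.sum_le_sum
    intro j _
    rw [Real.norm_eq_abs, sq]
    exact mul_le_mul_of_nonneg_left
      (Finset.single_le_sum (f := fun k => |v k|) (fun k _ => abs_nonneg _)
        (Finset.mem_univ j)) (abs_nonneg _)
  calc Real.sqrt (∑ j, ‖v j‖ ^ 2) ≤ Real.sqrt ((∑ j, |v j|) ^ 2) := Real.sqrt_le_sqrt h
    _ = ∑ j, |v j| := Real.sqrt_sq (Finset.sum_nonneg fun j _ => abs_nonneg _)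

private lemma key_bound {A : ℕ} (α : Fin A → ℝ) (hα : ∀ i, 0 < α i) {β : ℝ} (hβ : 1 < β)
    (i : Fin A) (x : EuclideanSpace ℝ (Fin A)) (hx0 : ∀ j, 0 ≤ x j) (hx1 : ∑ j, x j = 1)
    (hxi : 1 / 2 ≤ x i) :
    ‖pField A α β x - EuclideanSpace.single i (1 : ℝ)‖ ≤
      ((A : ℝ) * (∑ j, α j) / (α i * (1 / 2 : ℝ) ^ β)) * (1 - x i) ^ β := by
  have hβ0 : (0 : ℝ) ≤ β := by linarith
  set t : ℝ := 1 - x i with ht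
  have hxile : x i ≤ 1 := by
    rw [← hx1]; exact Finset.single_le_sum (fun j _ => hx0 j) (Finset.mem_univ i)
  have ht0 : 0 ≤ t := by simp only [ht]; linarith
  have hErase : ∑ j ∈ Finset.univ.erase i, x j = t := by
    have := Finset.add_sum_erase Finset.univ x (Finset.mem_univ i)
    rw [hx1] at this; simp only [ht]; linarith
  have hxj : ∀ j, j ≠ i → x j ≤ t := by
    intro j hj
    rw [← hErase]
    exact Finset.single_le_sum (fun k _ => hx0 k) (Finset.mem_erase.2 ⟨hj, Finset.mem_univ j⟩)
  set D : ℝ := ∑ j, α j * x j ^ β with hD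
  have hterm : ∀ j, 0 ≤ α j * x j ^ β :=
    fun j => mul_nonneg (hα j).le (Real.rpow_nonneg (hx0 j) β)
  have hDi : α i * x i ^ β ≤ D :=
    Finset.single_le_sum (fun j _ => hterm j) (Finset.mem_univ i)
  have hhalf : (0 : ℝ) < (1 / 2 : ℝ) ^ β := Real.rpow_pos_of_pos (by norm_num) β
  have hDlow : α i * (1 / 2 : ℝ) ^ β ≤ D := by
    refine le_trans ?_ hDi
    exact mul_le_mul_of_nonneg_left (Real.rpow_le_rpow (by norm_num) hxi hβ0) (hα i).le
  have hDlow0 : (0 : ℝ) < α i * (1 / 2 : ℝ) ^ β := mul_pos (hα i) hhalf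
  have hD0 : 0 < D := lt_of_lt_of_le hDlow0 hDlow
  set N : ℝ := ∑ j ∈ Finset.univ.erase i, α j * x j ^ β with hN
  have hDN : α i * x i ^ β + N = D :=
    Finset.add_sum_erase Finset.univ (fun j => α j * x j ^ β) (Finset.mem_univ i)
  have hN0 : 0 ≤ N := Finset.sum_nonneg fun j _ => hterm j
  -- each coordinate of p - e is bounded by N / D
  have habs : ∀ j, |(pField A α β x - EuclideanSpace.single i (1 : ℝ)) j| ≤ N / D := by
    intro j
    rw [PiLp.sub_apply]
    have hpj : pField A α β x j = α j * x j ^ β / D := rfl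
    rcases eq_or_ne j i with rfl | hj
    · have heq : pField A α β x j - EuclideanSpace.single j (1 : ℝ) j = -(N / D) := by
        rw [hpj, EuclideanSpace.single_apply, if_pos rfl]
        field_simp
        linarith [hDN]
      rw [heq, abs_neg, abs_of_nonneg (div_nonneg hN0 hD0.le)]
    · rw [EuclideanSpace.single_apply, if_neg hj, sub_zero, hpj,
        abs_of_nonneg (div_nonneg (hterm j) hD0.le)]
      exact (div_le_div_iff_of_pos_right hD0).2
        (Finset.single_le_sum (fun k _ => hterm k)
          (Finset.mem_erase.2 ⟨hj, Finset.mem_univ j⟩))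
  -- N is bounded by (∑ α) t^β
  have hNle : N ≤ (∑ j, α j) * t ^ β := by
    have h1 : N ≤ ∑ j ∈ Finset.univ.erase i, α j * t ^ β := by
      apply Finset.sum_le_sum
      intro j hj
      exact mul_le_mul_of_nonneg_left
        (Real.rpow_le_rpow (hx0 j) (hxj j (Finset.mem_erase.1 hj).1) hβ0) (hα j).le
    have h2 : ∑ j ∈ Finset.univ.erase i, α j * t ^ β ≤ ∑ j, α j * t ^ β :=
      Finset.sum_le_sum_of_subset_of_nonneg (Finset.erase_subset _ _)
        (fun j _ _ => mul_nonneg (hα j).le (Real.rpow_nonneg ht0 β))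
    calc N ≤ ∑ j ∈ Finset.univ.erase i, α j * t ^ β := h1
      _ ≤ ∑ j, α j * t ^ β := h2
      _ = (∑ j, α j) * t ^ β := by rw [Finset.sum_mul]
  calc ‖pField A α β x - EuclideanSpace.single i (1 : ℝ)‖
      ≤ ∑ j, |(pField A α β x - EuclideanSpace.single i (1 : ℝ)) j| := norm_le_sum_abs _
    _ ≤ ∑ _j : Fin A, N / D := Finset.sum_le_sum fun j _ => habs j
    _ = (A : ℝ) * (N / D) := by
        rw [Finset.sum_const, Finset.card_univ, Fintype.card_fin, nsmul_eq_mul]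
    _ ≤ (A : ℝ) * ((∑ j, α j) * t ^ β / (α i * (1 / 2 : ℝ) ^ β)) := by
        apply mul_le_mul_of_nonneg_left _ (Nat.cast_nonneg A)
        exact div_le_div₀ (mul_nonneg (Finset.sum_nonneg fun j _ => (hα j).le)
          (Real.rpow_nonneg ht0 β)) hNle hDlow0 hDlow
    _ = ((A : ℝ) * (∑ j, α j) / (α i * (1 / 2 : ℝ) ^ β)) * t ^ β := by ring

/-- for `β > 1` and the `i`-th vertex `e = e^{(i)}` of the simplex,
`p(e) = e` and `p` has zero derivative at `e` along the simplex:
`‖p(x) - e‖/‖x - e‖ → 0` as `x → e` in `Δ \ {e}`; equivalently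
`G₀(x) = -(x - e) + o(‖x - e‖)`, i.e. the derivative of `G₀` at the monopoly
point along `Δ` is minus the identity. -/
theorem monopoly_point_is_hyperbolic_fixed_point
    (A : ℕ) (hA : 2 ≤ A) (α : Fin A → ℝ) (hα : ∀ i, 0 < α i)
    (β : ℝ) (hβ : 1 < β) (i : Fin A)
    (e : EuclideanSpace ℝ (Fin A)) (he : e = EuclideanSpace.single i (1 : ℝ)) :
    pField A α β e = e ∧
    Filter.Tendsto (fun x : EuclideanSpace ℝ (Fin A) => ‖pField A α β x - e‖ / ‖x - e‖)
      (𝓝[simplexE A \ {e}] e) (𝓝 0) ∧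
    Filter.Tendsto (fun x : EuclideanSpace ℝ (Fin A) => ‖G0Field A α β x + (x - e)‖ / ‖x - e‖)
      (𝓝[simplexE A \ {e}] e) (𝓝 0) := by
  subst he
  set e : EuclideanSpace ℝ (Fin A) := EuclideanSpace.single i (1 : ℝ) with hedef
  have hβ0 : (0 : ℝ) ≤ β := by linarith
  have hβne : β ≠ 0 := by linarith
  -- Part 1
  have part1 : pField A α β e = e := by
    have hsum : ∑ j, α j * (e j) ^ β = α i := by
      have hterm : ∀ j, α j * (e j) ^ β = if j = i then α i else 0 := by
        intro j
        rcases eq_or_ne j i with rfl | hj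
        · simp [hedef, EuclideanSpace.single_apply, Real.one_rpow]
        · simp [hedef, EuclideanSpace.single_apply, hj, Real.zero_rpow hβne]
      simp [hterm]
    ext j
    have hpj : pField A α β e j = α j * (e j) ^ β / ∑ k, α k * (e k) ^ β := rfl
    rw [hpj, hsum]
    rcases eq_or_ne j i with rfl | hj
    · simp [hedef, EuclideanSpace.single_apply, Real.one_rpow, div_self (hα j).ne']
    · simp [hedef, EuclideanSpace.single_apply, hj, Real.zero_rpow hβne]
  set C : ℝ := (A : ℝ) * (∑ j, α j) / (α i * (1 / 2 : ℝ) ^ β) with hC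
  have hC0 : 0 ≤ C := by
    apply div_nonneg _ (mul_pos (hα i) (Real.rpow_pos_of_pos (by norm_num) β)).le
    exact mul_nonneg (Nat.cast_nonneg A) (Finset.sum_nonneg fun j _ => (hα j).le)
  -- Part 2
  have part2 : Filter.Tendsto
      (fun x : EuclideanSpace ℝ (Fin A) => ‖pField A α β x - e‖ / ‖x - e‖)
      (𝓝[simplexE A \ {e}] e) (𝓝 0) := by
    apply squeeze_zero' (g := fun x => C * ‖x - e‖ ^ (β - 1))
    · filter_upwards with x
      exact div_nonneg (norm_nonneg _) (norm_nonneg _)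
    · have hmem : ∀ᶠ x in 𝓝[simplexE A \ {e}] e, x ∈ simplexE A \ {e} :=
        self_mem_nhdsWithin
      have hball : ∀ᶠ x in 𝓝[simplexE A \ {e}] e, ‖x - e‖ < 1 / 2 := by
        have h := Metric.ball_mem_nhds e (by norm_num : (0 : ℝ) < 1 / 2)
        have h2 : ∀ᶠ x in 𝓝 e, ‖x - e‖ < 1 / 2 := by
          filter_upwards [h] with x hx
          simpa [Metric.mem_ball, dist_eq_norm] using hx
        exact h2.filter_mono nhdsWithin_le_nhds
      filter_upwards [hmem, hball] with x hx hlt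
      obtain ⟨hxs, hne⟩ := hx
      have hne' : x ≠ e := hne
      have hpos : 0 < ‖x - e‖ := by
        rw [norm_pos_iff]; exact sub_ne_zero.2 hne'
      have hcoord : |x i - 1| ≤ ‖x - e‖ := by
        have h := coord_le_norm (x - e) i
        rwa [PiLp.sub_apply, hedef, EuclideanSpace.single_apply, if_pos rfl] at h
      have ht_le : 1 - x i ≤ ‖x - e‖ := by
        have : 1 - x i ≤ |1 - x i| := le_abs_self _
        rw [abs_sub_comm] at this
        linarith [hcoord, this]
      have hxi : 1 / 2 ≤ x i := by linarith
      have hxile : x i ≤ 1 := by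
        rw [← hxs.2]; exact Finset.single_le_sum (fun j _ => hxs.1 j) (Finset.mem_univ i)
      have ht0 : 0 ≤ 1 - x i := by linarith
      have hkey := key_bound α hα hβ i x hxs.1 hxs.2 hxi
      have hrpow : (1 - x i) ^ β ≤ ‖x - e‖ ^ β := Real.rpow_le_rpow ht0 ht_le hβ0
      calc ‖pField A α β x - e‖ / ‖x - e‖
          ≤ C * (1 - x i) ^ β / ‖x - e‖ := (div_le_div_iff_of_pos_right hpos).2 hkey
        _ ≤ C * ‖x - e‖ ^ β / ‖x - e‖ :=
            (div_le_div_iff_of_pos_right hpos).2 (mul_le_mul_of_nonneg_left hrpow hC0)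
        _ = C * ‖x - e‖ ^ (β - 1) := by
            rw [mul_div_assoc, Real.rpow_sub hpos, Real.rpow_one]
    · have h1 : Filter.Tendsto (fun x : EuclideanSpace ℝ (Fin A) => ‖x - e‖)
          (𝓝[simplexE A \ {e}] e) (𝓝 0) := by
        exact (tendsto_norm_sub_self e).mono_left nhdsWithin_le_nhds
      have h2 : Filter.Tendsto (fun r : ℝ => r ^ (β - 1)) (𝓝 0) (𝓝 0) := by
        have h := (Real.continuousAt_rpow_const 0 (β - 1) (Or.inr (by linarith))).tendsto
        simpa [Real.zero_rpow (by linarith : β - 1 ≠ 0)] using h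
      have h3 := (h2.comp h1).const_mul C
      simpa using h3
  refine ⟨part1, part2, ?_⟩
  have hfun : ∀ x : EuclideanSpace ℝ (Fin A),
      G0Field A α β x + (x - e) = pField A α β x - e := by
    intro x
    simp only [G0Field]
    abel
  simpa only [hfun] using part2
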